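/- arXiv:2501.02353 — 9 statements merged into one kernel-verified Lean document; each statement's English description precedes it below -/
import Mathlib

section
/- Balanceable Bernstein condition for classification: for every measurable classifier f : 𝒳 → {−1,1}, the random variable Z(x,y) = ω*(x)·(1{y ≠ f(x)} − 1{y ≠ f*(x)}) on (𝒳 × ℝ, ν) satisfies Var_ν[Z] ≤ E_ν[Z]. -/
open MeasureTheory

/-- Balanceable Bernstein condition for classification: the `ω*`-weighted excess 0-1 loss
`Z(x,y) = ω*(x)·(1{y ≠ f x} − 1{y ≠ f* x})` satisfies `Var_ν[Z] ≤ E_ν[Z]`, where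
`f*(x) = if η x ≥ 1/2 then 1 else -1` and `ω*(x) = |2 η x − 1|`. -/
theorem balanceable_bernstein_classification
    {𝒳 : Type*} [MeasurableSpace 𝒳]
    (μ : Measure 𝒳) [IsProbabilityMeasure μ]
    (ν : Measure (𝒳 × ℝ)) [IsProbabilityMeasure ν]
    (η : 𝒳 → ℝ) (hη : Measurable η) (hη01 : ∀ x, η x ∈ Set.Icc (0 : ℝ) 1)
    (hν : ∀ g : 𝒳 × ℝ → ℝ, Measurable g → (∃ M, ∀ p, |g p| ≤ M) →
      ∫ p, g p ∂ν = ∫ x, η x * g (x, 1) + (1 - η x) * g (x, -1) ∂μ)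
    (f : 𝒳 → ℝ) (hf : Measurable f) (hfpm : ∀ x, f x = 1 ∨ f x = -1) :
    (∫ p : 𝒳 × ℝ,
        (|2 * η p.1 - 1| *
          ((if p.2 ≠ f p.1 then (1 : ℝ) else 0)
            - (if p.2 ≠ (if (1/2 : ℝ) ≤ η p.1 then (1 : ℝ) else -1) then (1 : ℝ) else 0))) ^ 2 ∂ν)
      - (∫ p : 𝒳 × ℝ,
          |2 * η p.1 - 1| *
            ((if p.2 ≠ f p.1 then (1 : ℝ) else 0)
              - (if p.2 ≠ (if (1/2 : ℝ) ≤ η p.1 then (1 : ℝ) else -1) then (1 : ℝ) else 0)) ∂ν) ^ 2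
      ≤ ∫ p : 𝒳 × ℝ,
          |2 * η p.1 - 1| *
            ((if p.2 ≠ f p.1 then (1 : ℝ) else 0)
              - (if p.2 ≠ (if (1/2 : ℝ) ≤ η p.1 then (1 : ℝ) else -1) then (1 : ℝ) else 0)) ∂ν := by
  set F : 𝒳 × ℝ → ℝ := fun p =>
    |2 * η p.1 - 1| *
      ((if p.2 ≠ f p.1 then (1 : ℝ) else 0)
        - (if p.2 ≠ (if (1/2 : ℝ) ≤ η p.1 then (1 : ℝ) else -1) then (1 : ℝ) else 0)) with hF
  -- measurability of F
  have hω : Measurable fun x : 𝒳 => |2 * η x - 1| :=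
    ((hη.const_mul 2).sub measurable_const).abs
  have hind1 : Measurable fun p : 𝒳 × ℝ => (if p.2 ≠ f p.1 then (1 : ℝ) else 0) := by
    have hs : MeasurableSet {p : 𝒳 × ℝ | p.2 = f p.1} :=
      measurableSet_eq_fun measurable_snd (hf.comp measurable_fst)
    exact Measurable.ite hs.compl measurable_const measurable_const
  have hfs : Measurable fun x : 𝒳 => (if (1/2 : ℝ) ≤ η x then (1 : ℝ) else -1) :=
    Measurable.ite (measurableSet_le measurable_const hη) measurable_const measurable_const
  have hind2 : Measurable fun p : 𝒳 × ℝ =>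
      (if p.2 ≠ (if (1/2 : ℝ) ≤ η p.1 then (1 : ℝ) else -1) then (1 : ℝ) else 0) := by
    have hs : MeasurableSet {p : 𝒳 × ℝ | p.2 = (if (1/2 : ℝ) ≤ η p.1 then (1 : ℝ) else -1)} :=
      measurableSet_eq_fun measurable_snd (hfs.comp measurable_fst)
    exact Measurable.ite hs.compl measurable_const measurable_const
  have hFmeas : Measurable F := ((hω.comp measurable_fst)).mul (hind1.sub hind2)
  have hFbd : ∀ p, |F p| ≤ 2 := by
    intro p
    have h1 : |2 * η p.1 - 1| ≤ 1 := by
      have := (hη01 p.1).1; have := (hη01 p.1).2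
      rw [abs_le]; constructor <;> linarith
    have h2 : |(if p.2 ≠ f p.1 then (1 : ℝ) else 0)
        - (if p.2 ≠ (if (1/2 : ℝ) ≤ η p.1 then (1 : ℝ) else -1) then (1 : ℝ) else 0)| ≤ 2 := by
      split_ifs <;> norm_num
    have heq : |F p| = |2 * η p.1 - 1| *
        |(if p.2 ≠ f p.1 then (1 : ℝ) else 0)
          - (if p.2 ≠ (if (1/2 : ℝ) ≤ η p.1 then (1 : ℝ) else -1) then (1 : ℝ) else 0)| := by
      simp only [hF]; rw [abs_mul, abs_abs]
    rw [heq]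
    have := mul_le_mul h1 h2 (abs_nonneg _) zero_le_one
    linarith
  have hZ2 := hν (fun p => F p ^ 2) (hFmeas.pow_const 2)
    ⟨4, fun p => by
      have h := hFbd p
      have h2 : F p ^ 2 ≤ 4 := by nlinarith [sq_abs (F p), abs_nonneg (F p)]
      simpa [abs_of_nonneg (sq_nonneg (F p))] using h2⟩
  have hZ := hν F hFmeas ⟨2, hFbd⟩
  -- pointwise key identity
  have hpt : ∀ x : 𝒳, η x * F (x, 1) ^ 2 + (1 - η x) * F (x, -1) ^ 2
      = η x * F (x, 1) + (1 - η x) * F (x, -1) := by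
    intro x
    have h0 := (hη01 x).1
    have h1 := (hη01 x).2
    rcases hfpm x with hfx | hfx <;> by_cases hh : (1/2 : ℝ) ≤ η x
    · simp only [hF, hfx, if_pos hh]; norm_num
    · simp only [hF, hfx, if_neg hh]; norm_num
      rw [abs_of_neg (by linarith : (2 * η x - 1 : ℝ) < 0)]; ring
    · simp only [hF, hfx, if_pos hh]; norm_num
      rw [abs_of_nonneg (by linarith : (0 : ℝ) ≤ 2 * η x - 1)]; ring
    · simp only [hF, hfx, if_neg hh]; norm_num
  have hint : ∫ p, F p ^ 2 ∂ν = ∫ p, F p ∂ν := by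
    rw [hZ2, hZ]
    exact integral_congr_ae (Filter.Eventually.of_forall hpt)
  have hsq : (0 : ℝ) ≤ (∫ p, F p ∂ν) ^ 2 := sq_nonneg _
  have : (∫ p, F p ^ 2 ∂ν) - (∫ p, F p ∂ν) ^ 2 ≤ ∫ p, F p ^ 2 ∂ν := by linarith
  calc (∫ p, F p ^ 2 ∂ν) - (∫ p, F p ∂ν) ^ 2 ≤ ∫ p, F p ^ 2 ∂ν := this
    _ = ∫ p, F p ∂ν := hint
end

section
/- Bernstein condition under the margin condition: if there is γ ∈ (0,1] such that ω*(x) ≥ γ for μ-almost every x, then for every measurable classifier f : 𝒳 → {−1,1}, the random variable Z(x,y) = 1{y ≠ f(x)} − 1{y ≠ f*(x)} on (𝒳 × ℝ, ν) satisfies Var_ν[Z] ≤ (1/γ) · E_ν[Z]. -/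
open MeasureTheory

/-- Bernstein condition under the margin condition: if `ω*(x) = |2 η x − 1| ≥ γ` for μ-a.e. `x`,
the excess 0-1 loss `Z(x,y) = 1{y ≠ f x} − 1{y ≠ f* x}` satisfies `Var_ν[Z] ≤ (1/γ)·E_ν[Z]`. -/
theorem bernstein_margin_condition_classification
    {𝒳 : Type*} [MeasurableSpace 𝒳]
    (μ : Measure 𝒳) [IsProbabilityMeasure μ]
    (ν : Measure (𝒳 × ℝ)) [IsProbabilityMeasure ν]
    (η : 𝒳 → ℝ) (hη : Measurable η) (hη01 : ∀ x, η x ∈ Set.Icc (0 : ℝ) 1)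
    (hν : ∀ g : 𝒳 × ℝ → ℝ, Measurable g → (∃ M, ∀ p, |g p| ≤ M) →
      ∫ p, g p ∂ν = ∫ x, η x * g (x, 1) + (1 - η x) * g (x, -1) ∂μ)
    (γ : ℝ) (hγ0 : 0 < γ) (hγ1 : γ ≤ 1)
    (hmargin : ∀ᵐ x ∂μ, γ ≤ |2 * η x - 1|)
    (f : 𝒳 → ℝ) (hf : Measurable f) (hfpm : ∀ x, f x = 1 ∨ f x = -1) :
    (∫ p : 𝒳 × ℝ,
        ((if p.2 ≠ f p.1 then (1 : ℝ) else 0)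
          - (if p.2 ≠ (if (1/2 : ℝ) ≤ η p.1 then (1 : ℝ) else -1) then (1 : ℝ) else 0)) ^ 2 ∂ν)
      - (∫ p : 𝒳 × ℝ,
          (if p.2 ≠ f p.1 then (1 : ℝ) else 0)
            - (if p.2 ≠ (if (1/2 : ℝ) ≤ η p.1 then (1 : ℝ) else -1) then (1 : ℝ) else 0) ∂ν) ^ 2
      ≤ (1 / γ) * ∫ p : 𝒳 × ℝ,
          (if p.2 ≠ f p.1 then (1 : ℝ) else 0)
            - (if p.2 ≠ (if (1/2 : ℝ) ≤ η p.1 then (1 : ℝ) else -1) then (1 : ℝ) else 0) ∂ν := by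
  set fstar : 𝒳 → ℝ := fun x => if (1/2 : ℝ) ≤ η x then (1 : ℝ) else -1 with hfstar
  set Z : 𝒳 × ℝ → ℝ := fun p =>
    (if p.2 ≠ f p.1 then (1 : ℝ) else 0) - (if p.2 ≠ fstar p.1 then (1 : ℝ) else 0) with hZ
  show (∫ p, Z p ^ 2 ∂ν) - (∫ p, Z p ∂ν) ^ 2 ≤ (1 / γ) * ∫ p, Z p ∂ν
  have hfstarm : Measurable fstar := by
    apply Measurable.ite (measurableSet_le measurable_const hη) measurable_const measurable_const
  have hZm : Measurable Z := by
    have h1 : MeasurableSet {p : 𝒳 × ℝ | p.2 ≠ f p.1} :=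
      (measurableSet_eq_fun measurable_snd (hf.comp measurable_fst)).compl
    have h2 : MeasurableSet {p : 𝒳 × ℝ | p.2 ≠ fstar p.1} :=
      (measurableSet_eq_fun measurable_snd (hfstarm.comp measurable_fst)).compl
    exact ((measurable_const.ite h1 measurable_const).sub
      (measurable_const.ite h2 measurable_const))
  have hZbd : ∀ p, |Z p| ≤ 1 := by
    intro p
    simp only [hZ]
    split_ifs <;> norm_num
  have hZ2m : Measurable (fun p => Z p ^ 2) := hZm.pow_const 2
  have hZ2bd : ∀ p, |Z p ^ 2| ≤ 1 := by
    intro p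
    rw [abs_pow, sq_abs]
    have h := abs_le.mp (hZbd p)
    nlinarith [h.1, h.2]
  have hE1 : ∫ p, Z p ∂ν = ∫ x, η x * Z (x, 1) + (1 - η x) * Z (x, -1) ∂μ :=
    hν Z hZm ⟨1, hZbd⟩
  have hE2 : ∫ p, Z p ^ 2 ∂ν = ∫ x, η x * Z (x, 1) ^ 2 + (1 - η x) * Z (x, -1) ^ 2 ∂μ :=
    hν (fun p => Z p ^ 2) hZ2m ⟨1, hZ2bd⟩
  set A : 𝒳 → ℝ := fun x => η x * Z (x, 1) + (1 - η x) * Z (x, -1) with hA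
  set B : 𝒳 → ℝ := fun x => η x * Z (x, 1) ^ 2 + (1 - η x) * Z (x, -1) ^ 2 with hB
  have hAm : Measurable A := by
    apply Measurable.add
    · exact hη.mul (hZm.comp (measurable_id.prodMk measurable_const))
    · exact (measurable_const.sub hη).mul (hZm.comp (measurable_id.prodMk measurable_const))
  have hBm : Measurable B := by
    apply Measurable.add
    · exact hη.mul ((hZ2m.comp (measurable_id.prodMk measurable_const)))
    · exact (measurable_const.sub hη).mul ((hZ2m.comp (measurable_id.prodMk measurable_const)))
  have hAbd : ∀ x, ‖A x‖ ≤ 2 := by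
    intro x
    have h0 := (hη01 x).1
    have h1 := (hη01 x).2
    have b1 := abs_le.mp (hZbd (x, 1))
    have b2 := abs_le.mp (hZbd (x, -1))
    rw [Real.norm_eq_abs, abs_le]
    simp only [hA]
    constructor <;> nlinarith [b1.1, b1.2, b2.1, b2.2]
  have hBbd : ∀ x, ‖B x‖ ≤ 2 := by
    intro x
    have h0 := (hη01 x).1
    have h1 := (hη01 x).2
    have b1 := abs_le.mp (hZ2bd (x, 1))
    have b2 := abs_le.mp (hZ2bd (x, -1))
    rw [Real.norm_eq_abs, abs_le]
    simp only [hB]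
    constructor <;> nlinarith [b1.1, b1.2, b2.1, b2.2]
  have hAint : Integrable A μ :=
    (integrable_const (2:ℝ)).mono' hAm.aestronglyMeasurable (Filter.Eventually.of_forall hAbd)
  have hBint : Integrable B μ :=
    (integrable_const (2:ℝ)).mono' hBm.aestronglyMeasurable (Filter.Eventually.of_forall hBbd)
  have hpt : ∀ᵐ x ∂μ, B x ≤ (1 / γ) * A x := by
    filter_upwards [hmargin] with x hx
    rcases hfpm x with hfx | hfx <;> rcases le_or_gt ((1:ℝ)/2) (η x) with hle | hle
    · -- f x = 1, fstar = 1
      have hZ1 : Z (x, 1) = 0 := by norm_num [hZ, hfstar, hfx, hle]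
      have hZ2' : Z (x, -1) = 0 := by norm_num [hZ, hfstar, hfx, hle]
      simp only [hA, hB, hZ1, hZ2']
      simp
    · -- f x = 1, fstar = -1
      have hnle : ¬ ((1:ℝ)/2 ≤ η x) := not_le.mpr hle
      have hZ1 : Z (x, 1) = -1 := by norm_num [hZ, hfstar, hfx, hnle]
      have hZ2' : Z (x, -1) = 1 := by norm_num [hZ, hfstar, hfx, hnle]
      have habs : |2 * η x - 1| = 1 - 2 * η x := by
        rw [abs_of_nonpos] <;> linarith
      rw [habs] at hx
      have key : 1 ≤ (1/γ) * (1 - 2 * η x) := by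
        rw [one_div, inv_mul_eq_div, le_div_iff₀ hγ0]; linarith
      simp only [hA, hB, hZ1, hZ2']
      ring_nf
      ring_nf at key
      linarith
    · -- f x = -1, fstar = 1
      have hZ1 : Z (x, 1) = 1 := by norm_num [hZ, hfstar, hfx, hle]
      have hZ2' : Z (x, -1) = -1 := by norm_num [hZ, hfstar, hfx, hle]
      have habs : |2 * η x - 1| = 2 * η x - 1 := by
        rw [abs_of_nonneg]; linarith
      rw [habs] at hx
      have key : 1 ≤ (1/γ) * (2 * η x - 1) := by
        rw [one_div, inv_mul_eq_div, le_div_iff₀ hγ0]; linarith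
      simp only [hA, hB, hZ1, hZ2']
      ring_nf
      ring_nf at key
      linarith
    · -- f x = -1, fstar = -1
      have hnle : ¬ ((1:ℝ)/2 ≤ η x) := not_le.mpr hle
      have hZ1 : Z (x, 1) = 0 := by norm_num [hZ, hfstar, hfx, hnle]
      have hZ2' : Z (x, -1) = 0 := by norm_num [hZ, hfstar, hfx, hnle]
      simp only [hA, hB, hZ1, hZ2']
      simp
  have hmono : ∫ x, B x ∂μ ≤ ∫ x, (1/γ) * A x ∂μ :=
    integral_mono_ae hBint (hAint.const_mul _) hpt
  rw [integral_const_mul] at hmono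
  have goal1 : ∫ p, Z p ^ 2 ∂ν ≤ (1/γ) * ∫ p, Z p ∂ν := by
    rw [hE1, hE2]; exact hmono
  have hsq : (0:ℝ) ≤ (∫ p, Z p ∂ν) ^ 2 := sq_nonneg _
  linarith
end

section
/- Excess risk bound under weighted risk control: let f : 𝒳 → {−1,1} be measurable, ε ≥ 0 and c > 0. If ∫_𝒳 ω*(x)² · 1{f(x) ≠ f*(x)} dμ(x) ≤ ε, then the excess 0-1 risk satisfies ∫_{𝒳×ℝ} (1{y ≠ f(x)} − 1{y ≠ f*(x)}) dν(x,y) ≤ c · μ{x : ω*(x) < c} + ε/c. -/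
/-!
Conditionally on `x`, the excess risk of predicting `f x` instead of the Bayes label is
`|2η(x) - 1| = ω*(x)` when they disagree and `0` otherwise, so the excess risk is
`∫ ω* · 1{f ≠ f*} dμ`. Split according to `ω* < c`: there the integrand is at most `c`, and
elsewhere `ω* ≤ ω*² / c`, whose weighted integral is at most `ε / c`.
-/

open MeasureTheory

noncomputable section

def zeroOneLoss (y a : ℝ) : ℝ := if y ≠ a then 1 else 0

def bayesLabel (t : ℝ) : ℝ := if 1 / 2 ≤ t then 1 else -1

lemma zeroOneLoss_nonneg (y a : ℝ) : 0 ≤ zeroOneLoss y a := by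
  unfold zeroOneLoss; split_ifs <;> norm_num

lemma zeroOneLoss_le_one (y a : ℝ) : zeroOneLoss y a ≤ 1 := by
  unfold zeroOneLoss; split_ifs <;> norm_num

lemma abs_zeroOneLoss_sub_zeroOneLoss_le (y a b : ℝ) :
    |zeroOneLoss y a - zeroOneLoss y b| ≤ 1 :=
  abs_sub_le_iff.mpr
    ⟨by linarith [zeroOneLoss_le_one y a, zeroOneLoss_nonneg y b],
     by linarith [zeroOneLoss_le_one y b, zeroOneLoss_nonneg y a]⟩

lemma measurable_bayesLabel : Measurable bayesLabel :=
  Measurable.ite measurableSet_Ici measurable_const measurable_const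

lemma Measurable.zeroOneLoss {α : Type*} [MeasurableSpace α] {y a : α → ℝ}
    (hy : Measurable y) (ha : Measurable a) : Measurable fun x => zeroOneLoss (y x) (a x) :=
  Measurable.ite (measurableSet_eq_fun hy ha).compl measurable_const measurable_const

lemma conditional_excess_risk_eq (t a : ℝ) (ha : a = 1 ∨ a = -1) :
    t * (zeroOneLoss 1 a - zeroOneLoss 1 (bayesLabel t))
        + (1 - t) * (zeroOneLoss (-1) a - zeroOneLoss (-1) (bayesLabel t))
      = |2 * t - 1| * zeroOneLoss a (bayesLabel t) := by
  unfold zeroOneLoss bayesLabel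
  by_cases ht : 1 / 2 ≤ t
  · rw [abs_of_nonneg (by linarith)]
    rcases ha with rfl | rfl <;> norm_num [ht]; ring
  · rw [abs_of_neg (by linarith)]
    rcases ha with rfl | rfl <;> norm_num [ht]; ring

lemma mul_le_ite_add_sq_mul_div {w d c : ℝ} (hw : 0 ≤ w) (hd₀ : 0 ≤ d) (hd₁ : d ≤ 1)
    (hc : 0 < c) : w * d ≤ (if w < c then c else 0) + w ^ 2 * d / c := by
  have hsq : 0 ≤ w ^ 2 * d / c := by positivity
  split_ifs with hwc
  · nlinarith
  · rw [zero_add, le_div_iff₀ hc]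
    nlinarith [mul_le_mul_of_nonneg_right (not_lt.mp hwc) (mul_nonneg hw hd₀)]

theorem integral_mul_le_of_integral_sq_mul_le {α : Type*} [MeasurableSpace α]
    {μ : Measure α} [IsFiniteMeasure μ] {w d : α → ℝ} (hw : Measurable w)
    (hw₀ : ∀ x, 0 ≤ w x) (hd₀ : ∀ x, 0 ≤ d x) (hd₁ : ∀ x, d x ≤ 1)
    (hwd : Integrable (fun x => w x * d x) μ) (hw2d : Integrable (fun x => w x ^ 2 * d x) μ)
    {c ε : ℝ} (hc : 0 < c) (hε : ∫ x, w x ^ 2 * d x ∂μ ≤ ε) :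
    ∫ x, w x * d x ∂μ ≤ c * μ.real {x | w x < c} + ε / c := by
  set S := {x | w x < c}
  have hS : MeasurableSet S := measurableSet_lt hw measurable_const
  have hpt : ∀ x, w x * d x ≤ S.indicator (fun _ => c) x + w x ^ 2 * d x / c := fun x => by
    rw [Set.indicator_apply]
    exact mul_le_ite_add_sq_mul_div (hw₀ x) (hd₀ x) (hd₁ x) hc
  have hind : Integrable (S.indicator fun _ => c) μ := (integrable_const c).indicator hS
  calc ∫ x, w x * d x ∂μ
      ≤ ∫ x, S.indicator (fun _ => c) x + w x ^ 2 * d x / c ∂μ :=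
        integral_mono hwd (hind.add (hw2d.div_const c)) hpt
    _ = c * μ.real S + (∫ x, w x ^ 2 * d x ∂μ) / c := by
        rw [integral_add hind (hw2d.div_const c), integral_indicator_const _ hS, integral_div,
          smul_eq_mul, mul_comm]
    _ ≤ c * μ.real S + ε / c := by gcongr

end

lemma integral_excess_zeroOneLoss_eq {𝒳 : Type*} [MeasurableSpace 𝒳] {μ : Measure 𝒳}
    {ν : Measure (𝒳 × ℝ)} {η : 𝒳 → ℝ} (hη : Measurable η)
    (hν : ∀ g : 𝒳 × ℝ → ℝ, Measurable g → (∃ M, ∀ p, |g p| ≤ M) →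
      ∫ p, g p ∂ν = ∫ x, η x * g (x, 1) + (1 - η x) * g (x, -1) ∂μ)
    {f : 𝒳 → ℝ} (hf : Measurable f) (hfpm : ∀ x, f x = 1 ∨ f x = -1) :
    ∫ p, zeroOneLoss p.2 (f p.1) - zeroOneLoss p.2 (bayesLabel (η p.1)) ∂ν
      = ∫ x, |2 * η x - 1| * zeroOneLoss (f x) (bayesLabel (η x)) ∂μ := by
  have hg : Measurable fun p : 𝒳 × ℝ =>
      zeroOneLoss p.2 (f p.1) - zeroOneLoss p.2 (bayesLabel (η p.1)) :=
    (measurable_snd.zeroOneLoss (hf.comp measurable_fst)).sub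
      (measurable_snd.zeroOneLoss ((measurable_bayesLabel.comp hη).comp measurable_fst))
  rw [hν _ hg ⟨1, fun p => abs_zeroOneLoss_sub_zeroOneLoss_le _ _ _⟩]
  exact integral_congr_ae (.of_forall fun x => conditional_excess_risk_eq (η x) (f x) (hfpm x))

theorem excess_risk_from_weighted_risk_general
    {𝒳 : Type*} [MeasurableSpace 𝒳]
    (μ : Measure 𝒳) [IsProbabilityMeasure μ]
    (ν : Measure (𝒳 × ℝ))
    (η : 𝒳 → ℝ) (hη : Measurable η) (hη01 : ∀ x, η x ∈ Set.Icc (0 : ℝ) 1)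
    (hν : ∀ g : 𝒳 × ℝ → ℝ, Measurable g → (∃ M, ∀ p, |g p| ≤ M) →
      ∫ p, g p ∂ν = ∫ x, η x * g (x, 1) + (1 - η x) * g (x, -1) ∂μ)
    (f : 𝒳 → ℝ) (hf : Measurable f) (hfpm : ∀ x, f x = 1 ∨ f x = -1)
    (ε c : ℝ) (hc : 0 < c)
    (hweighted : ∫ x, |2 * η x - 1| ^ 2 *
        (if f x ≠ (if (1/2 : ℝ) ≤ η x then (1 : ℝ) else -1) then (1 : ℝ) else 0) ∂μ ≤ ε) :
    ∫ p : 𝒳 × ℝ,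
        ((if p.2 ≠ f p.1 then (1 : ℝ) else 0)
          - (if p.2 ≠ (if (1/2 : ℝ) ≤ η p.1 then (1 : ℝ) else -1) then (1 : ℝ) else 0)) ∂ν
      ≤ c * (μ {x | |2 * η x - 1| < c}).toReal + ε / c := by
  set w : 𝒳 → ℝ := fun x => |2 * η x - 1|
  set d : 𝒳 → ℝ := fun x => zeroOneLoss (f x) (bayesLabel (η x))
  have hw : Measurable w := ((hη.const_mul 2).sub measurable_const).abs
  have hd : Measurable d := hf.zeroOneLoss (measurable_bayesLabel.comp hη)
  have hw₁ : ∀ x, w x ≤ 1 := fun x =>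
    abs_le.mpr ⟨by linarith [(hη01 x).1], by linarith [(hη01 x).2]⟩
  have hpow_mul_d : ∀ n : ℕ, Integrable (fun x => w x ^ n * d x) μ := fun n =>
    .of_bound ((hw.pow_const n).mul hd).aestronglyMeasurable 1 <| .of_forall fun x => by
      rw [Real.norm_eq_abs, abs_of_nonneg (mul_nonneg (by positivity) (zeroOneLoss_nonneg _ _))]
      exact mul_le_one₀ (pow_le_one₀ (abs_nonneg _) (hw₁ x)) (zeroOneLoss_nonneg _ _)
        (zeroOneLoss_le_one _ _)
  calc ∫ p, zeroOneLoss p.2 (f p.1) - zeroOneLoss p.2 (bayesLabel (η p.1)) ∂ν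
      = ∫ x, w x * d x ∂μ := integral_excess_zeroOneLoss_eq hη hν hf hfpm
    _ ≤ c * μ.real {x | w x < c} + ε / c :=
      integral_mul_le_of_integral_sq_mul_le hw (fun x => abs_nonneg _)
        (fun x => zeroOneLoss_nonneg _ _) (fun x => zeroOneLoss_le_one _ _)
        (by simpa using hpow_mul_d 1) (hpow_mul_d 2) hc hweighted

/-- Excess risk bound under weighted risk control: if the `ω*²`-weighted disagreement with the
Bayes classifier is at most `ε`, then the excess 0-1 risk is at most
`c · μ{x : ω*(x) < c} + ε/c`. -/
theorem excess_risk_from_weighted_risk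
    {𝒳 : Type*} [MeasurableSpace 𝒳]
    (μ : Measure 𝒳) [IsProbabilityMeasure μ]
    (ν : Measure (𝒳 × ℝ)) [IsProbabilityMeasure ν]
    (η : 𝒳 → ℝ) (hη : Measurable η) (hη01 : ∀ x, η x ∈ Set.Icc (0 : ℝ) 1)
    (hν : ∀ g : 𝒳 × ℝ → ℝ, Measurable g → (∃ M, ∀ p, |g p| ≤ M) →
      ∫ p, g p ∂ν = ∫ x, η x * g (x, 1) + (1 - η x) * g (x, -1) ∂μ)
    (f : 𝒳 → ℝ) (hf : Measurable f) (hfpm : ∀ x, f x = 1 ∨ f x = -1)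
    (ε c : ℝ) (hε : 0 ≤ ε) (hc : 0 < c)
    (hweighted : ∫ x, |2 * η x - 1| ^ 2 *
        (if f x ≠ (if (1/2 : ℝ) ≤ η x then (1 : ℝ) else -1) then (1 : ℝ) else 0) ∂μ ≤ ε) :
    ∫ p : 𝒳 × ℝ,
        ((if p.2 ≠ f p.1 then (1 : ℝ) else 0)
          - (if p.2 ≠ (if (1/2 : ℝ) ≤ η p.1 then (1 : ℝ) else -1) then (1 : ℝ) else 0)) ∂ν
      ≤ c * (μ {x | |2 * η x - 1| < c}).toReal + ε / c :=
  excess_risk_from_weighted_risk_general μ ν η hη hη01 hν f hf hfpm ε c hc hweighted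
end

section
/- Bernstein condition for least-squares regression of the conditional label probability: let η : 𝒳 → [0,1] be measurable and set Δ(x,y) = (η(x) − y)² − (η*(x) − y)² on (𝒳 × ℝ, ν'). Then E_{ν'}[Δ] = ∫_𝒳 (η(x) − η*(x))² dμ(x) and Var_{ν'}[Δ] ≤ 2 · E_{ν'}[Δ]. -/
open MeasureTheory

/-- Bernstein condition for least-squares regression of the conditional label probability:
for `Δ(x,y) = (η x − y)² − (η* x − y)²` on `(𝒳 × ℝ, ν')` with labels in `{0,1}`,
`E_{ν'}[Δ] = ∫ (η − η*)² dμ` and `Var_{ν'}[Δ] ≤ 2·E_{ν'}[Δ]`. -/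
theorem bernstein_least_squares_label_probability
    {𝒳 : Type*} [MeasurableSpace 𝒳]
    (μ : Measure 𝒳) [IsProbabilityMeasure μ]
    (ν' : Measure (𝒳 × ℝ)) [IsProbabilityMeasure ν']
    (ηstar : 𝒳 → ℝ) (hηstar : Measurable ηstar) (hηstar01 : ∀ x, ηstar x ∈ Set.Icc (0 : ℝ) 1)
    (hν' : ∀ g : 𝒳 × ℝ → ℝ, Measurable g → (∃ M, ∀ p, |g p| ≤ M) →
      ∫ p, g p ∂ν' = ∫ x, ηstar x * g (x, 1) + (1 - ηstar x) * g (x, 0) ∂μ)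
    (η : 𝒳 → ℝ) (hη : Measurable η) (hη01 : ∀ x, η x ∈ Set.Icc (0 : ℝ) 1) :
    (∫ p : 𝒳 × ℝ, ((η p.1 - p.2) ^ 2 - (ηstar p.1 - p.2) ^ 2) ∂ν'
        = ∫ x, (η x - ηstar x) ^ 2 ∂μ)
    ∧ (∫ p : 𝒳 × ℝ, ((η p.1 - p.2) ^ 2 - (ηstar p.1 - p.2) ^ 2) ^ 2 ∂ν')
        - (∫ p : 𝒳 × ℝ, ((η p.1 - p.2) ^ 2 - (ηstar p.1 - p.2) ^ 2) ∂ν') ^ 2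
      ≤ 2 * ∫ p : 𝒳 × ℝ, ((η p.1 - p.2) ^ 2 - (ηstar p.1 - p.2) ^ 2) ∂ν' := by
  set D1 : 𝒳 → ℝ := fun x => (η x - 1) ^ 2 - (ηstar x - 1) ^ 2 with hD1
  set D0 : 𝒳 → ℝ := fun x => (η x - 0) ^ 2 - (ηstar x - 0) ^ 2 with hD0
  set g : 𝒳 × ℝ → ℝ := fun p => if p.2 = 1 then D1 p.1 else D0 p.1 with hg
  have hSmeas : MeasurableSet {p : 𝒳 × ℝ | p.2 = 1} := by
    have : {p : 𝒳 × ℝ | p.2 = 1} = Prod.snd ⁻¹' {1} := rfl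
    rw [this]; exact measurable_snd (measurableSet_singleton 1)
  have hD1m : Measurable D1 := by fun_prop
  have hD0m : Measurable D0 := by fun_prop
  have hgm : Measurable g := Measurable.ite hSmeas (hD1m.comp measurable_fst)
    (hD0m.comp measurable_fst)
  have hbD1 : ∀ x, |D1 x| ≤ 1 := by
    intro x
    obtain ⟨h1, h2⟩ := hη01 x; obtain ⟨h3, h4⟩ := hηstar01 x
    rw [abs_le]; constructor <;> simp only [hD1] <;> nlinarith
  have hbD0 : ∀ x, |D0 x| ≤ 1 := by
    intro x
    obtain ⟨h1, h2⟩ := hη01 x; obtain ⟨h3, h4⟩ := hηstar01 x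
    rw [abs_le]; constructor <;> simp only [hD0] <;> nlinarith
  have hgb : ∀ p, |g p| ≤ 1 := by
    intro p; simp only [hg]; split
    · exact hbD1 p.1
    · exact hbD0 p.1
  -- ν' is supported on labels {0,1}
  have hsupp : ν' {p : 𝒳 × ℝ | ¬(p.2 = 1 ∨ p.2 = 0)} = 0 := by
    set S : Set (𝒳 × ℝ) := {p : 𝒳 × ℝ | ¬(p.2 = 1 ∨ p.2 = 0)} with hS
    have hSm : MeasurableSet S := by
      have : S = (Prod.snd ⁻¹' ({1, 0} : Set ℝ))ᶜ := by
        ext p; simp [hS]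
      rw [this]
      exact (measurable_snd (by measurability : MeasurableSet ({1,0} : Set ℝ))).compl
    have hind := hν' (S.indicator (fun _ => (1:ℝ)))
      ((measurable_const).indicator hSm)
      ⟨1, by
        intro p
        by_cases h : p ∈ S <;> simp [Set.indicator, h]⟩
    have hR : ∫ x, ηstar x * S.indicator (fun _ => (1:ℝ)) (x, 1)
        + (1 - ηstar x) * S.indicator (fun _ => (1:ℝ)) (x, 0) ∂μ = 0 := by
      have : ∀ x : 𝒳, ηstar x * S.indicator (fun _ => (1:ℝ)) (x, 1)
          + (1 - ηstar x) * S.indicator (fun _ => (1:ℝ)) (x, 0) = 0 := by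
        intro x
        have h1 : ((x, (1:ℝ)) : 𝒳 × ℝ) ∉ S := by simp [hS]
        have h0 : ((x, (0:ℝ)) : 𝒳 × ℝ) ∉ S := by simp [hS]
        simp [Set.indicator_of_notMem h1, Set.indicator_of_notMem h0]
      simp [this]
    rw [hR] at hind
    have h1 : ∫ p, S.indicator (fun _ => (1:ℝ)) p ∂ν' = (ν' S).toReal := by
      rw [show (fun _ => (1:ℝ)) = (1 : 𝒳 × ℝ → ℝ) from rfl]
      exact integral_indicator_one hSm
    rw [h1] at hind
    have hfin : ν' S ≠ ⊤ := measure_ne_top ν' S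
    exact (ENNReal.toReal_eq_zero_iff _).1 hind |>.resolve_right hfin
  have hae : (fun p : 𝒳 × ℝ => (η p.1 - p.2) ^ 2 - (ηstar p.1 - p.2) ^ 2) =ᵐ[ν'] g := by
    refine measure_mono_null ?_ hsupp
    intro p hp
    simp only [Set.mem_setOf_eq] at hp ⊢
    intro hcon
    apply hp
    rcases hcon with h | h
    · simp [hg, h, hD1]
    · simp [hg, h, hD0]
  have hI1 : ∫ p : 𝒳 × ℝ, ((η p.1 - p.2) ^ 2 - (ηstar p.1 - p.2) ^ 2) ∂ν'
      = ∫ x, (η x - ηstar x) ^ 2 ∂μ := by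
    rw [integral_congr_ae hae, hν' g hgm ⟨1, hgb⟩]
    refine integral_congr_ae (Filter.Eventually.of_forall fun x => ?_)
    simp only [hg, hD1, hD0, if_pos rfl, if_neg (zero_ne_one (α := ℝ))]
    ring
  have hI2 : ∫ p : 𝒳 × ℝ, ((η p.1 - p.2) ^ 2 - (ηstar p.1 - p.2) ^ 2) ^ 2 ∂ν'
      ≤ 2 * ∫ x, (η x - ηstar x) ^ 2 ∂μ := by
    have hae2 : (fun p : 𝒳 × ℝ => ((η p.1 - p.2) ^ 2 - (ηstar p.1 - p.2) ^ 2) ^ 2)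
        =ᵐ[ν'] fun p => (g p) ^ 2 := by
      filter_upwards [hae] with p hp
      rw [hp]
    rw [integral_congr_ae hae2]
    have hb2 : ∀ p, |(g p) ^ 2| ≤ 1 := by
      intro p
      rw [abs_pow]
      calc |g p| ^ 2 ≤ 1 ^ 2 := pow_le_pow_left₀ (abs_nonneg _) (hgb p) 2
        _ = 1 := one_pow 2
    rw [hν' (fun p => (g p) ^ 2) (hgm.pow_const 2) ⟨1, hb2⟩]
    have hpt : ∀ x, ηstar x * (g (x, 1)) ^ 2 + (1 - ηstar x) * (g (x, 0)) ^ 2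
        ≤ 2 * (η x - ηstar x) ^ 2 := by
      intro x
      obtain ⟨h1, h2⟩ := hη01 x; obtain ⟨h3, h4⟩ := hηstar01 x
      simp only [hg, if_pos rfl, if_neg (by norm_num : (0:ℝ) ≠ 1), hD1, hD0]
      nlinarith [sq_nonneg (η x - ηstar x), sq_nonneg (η x + ηstar x - 1),
        sq_nonneg ((η x - ηstar x) * (η x + ηstar x - 1)),
        mul_nonneg (mul_nonneg h3 (sub_nonneg.2 h4)) (sq_nonneg (η x - ηstar x))]
    have hint1 : Integrable (fun x => ηstar x * (g (x, 1)) ^ 2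
        + (1 - ηstar x) * (g (x, 0)) ^ 2) μ := by
      have hm : Measurable (fun x => ηstar x * (g (x, 1)) ^ 2
          + (1 - ηstar x) * (g (x, 0)) ^ 2) := by
        simp only [hg, if_pos rfl, if_neg (by norm_num : (0:ℝ) ≠ 1)]
        fun_prop
      refine (integrable_const (2:ℝ)).mono' hm.aestronglyMeasurable
        (Filter.Eventually.of_forall fun x => ?_)
      obtain ⟨h3, h4⟩ := hηstar01 x
      have b1 := hb2 (x, 1)
      have b0 := hb2 (x, 0)
      rw [abs_le] at b1 b0
      simp only [Real.norm_eq_abs, abs_le]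
      constructor <;> nlinarith [b1.1, b1.2, b0.1, b0.2]
    have hint2 : Integrable (fun x => 2 * (η x - ηstar x) ^ 2) μ := by
      refine (integrable_const (2:ℝ)).mono' (((hη.sub hηstar).pow_const 2).const_mul 2).aestronglyMeasurable
        (Filter.Eventually.of_forall fun x => ?_)
      obtain ⟨h1, h2⟩ := hη01 x; obtain ⟨h3, h4⟩ := hηstar01 x
      simp only [Real.norm_eq_abs, abs_le]
      constructor <;> nlinarith
    calc ∫ x, ηstar x * (g (x, 1)) ^ 2 + (1 - ηstar x) * (g (x, 0)) ^ 2 ∂μ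
        ≤ ∫ x, 2 * (η x - ηstar x) ^ 2 ∂μ := integral_mono hint1 hint2 hpt
      _ = 2 * ∫ x, (η x - ηstar x) ^ 2 ∂μ := integral_const_mul 2 _
  refine ⟨hI1, ?_⟩
  rw [hI1]
  nlinarith [sq_nonneg (∫ x, (η x - ηstar x) ^ 2 ∂μ), hI2]
end

section
/- Bernstein condition for bounded heteroscedastic regression: let 0 < γ ≤ 1, suppose 0 < σ*²(x) ≤ 1/γ for all x, and let f : 𝒳 → [−1,1] be measurable. With y = f*(x) + √(σ*²(x))·ξ, the excess squared loss Δ(x,ξ) = (y − f(x))² − (y − f*(x))² on (𝒳 × ℝ, μ ⊗ ρ) satisfies Var[Δ] ≤ (8/γ) · E[Δ]. -/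
/-!
Write `g = f* − f` and `s = √σ*²`. The excess loss `Δ = (g + s ξ)² − (s ξ)² = g² + 2 g s ξ` is
affine in the noise, so a centred, unit-variance `ξ` independent of `x` gives `E[Δ] = E[g²]` and
`E[Δ²] = E[g⁴] + 4 E[g² σ*²]`. Pointwise `g⁴ ≤ 4 g² ≤ 4 g² / γ` and `4 g² σ*² ≤ 4 g² / γ`,
and `Var[Δ] ≤ E[Δ²]`.
-/

open MeasureTheory

namespace MeasureTheory

theorem integrable_id_of_integrable_sq {ν : Measure ℝ} [IsFiniteMeasure ν]
    (h : Integrable (fun s : ℝ => s ^ 2) ν) : Integrable (fun s : ℝ => s) ν :=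
  ((memLp_two_iff_integrable_sq aestronglyMeasurable_id).2 h).integrable one_le_two

variable {α : Type*} [MeasurableSpace α] {μ : Measure α} [SFinite μ]
  {ρ : Measure ℝ} [IsProbabilityMeasure ρ]

theorem integral_prod_add_mul_snd {a b : α → ℝ} (ha : Integrable a μ) (hb : Integrable b μ)
    (hξ : Integrable (fun s : ℝ => s) ρ) (hmean : ∫ s, s ∂ρ = 0) :
    ∫ q : α × ℝ, a q.1 + b q.1 * q.2 ∂(μ.prod ρ) = ∫ x, a x ∂μ := by
  rw [integral_add (ha.comp_fst ρ) (hb.mul_prod hξ), integral_fun_fst,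
    integral_prod_mul b (fun s => s), hmean]
  simp

theorem integral_prod_sq_add_mul_snd {a b : α → ℝ} (ha : MemLp a 2 μ) (hb : MemLp b 2 μ)
    (hmean : ∫ s, s ∂ρ = 0) (hvar : ∫ s, s ^ 2 ∂ρ = 1) :
    ∫ q : α × ℝ, (a q.1 + b q.1 * q.2) ^ 2 ∂(μ.prod ρ)
      = ∫ x, a x ^ 2 ∂μ + ∫ x, b x ^ 2 ∂μ := by
  have hξ2 : Integrable (fun s : ℝ => s ^ 2) ρ := .of_integral_ne_zero (by simp [hvar])
  have hξ := integrable_id_of_integrable_sq hξ2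
  have hab : Integrable (fun x => 2 * (a x * b x)) μ := (ha.integrable_mul hb).const_mul 2
  have hlin : Integrable (fun q : α × ℝ => a q.1 ^ 2 + 2 * (a q.1 * b q.1) * q.2) (μ.prod ρ) :=
    (ha.integrable_sq.comp_fst ρ).add (hab.mul_prod hξ)
  have expand : ∀ q : α × ℝ, (a q.1 + b q.1 * q.2) ^ 2
      = (a q.1 ^ 2 + 2 * (a q.1 * b q.1) * q.2) + b q.1 ^ 2 * q.2 ^ 2 := fun q => by ring
  simp_rw [expand]
  rw [integral_add hlin (hb.integrable_sq.mul_prod hξ2),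
    integral_prod_add_mul_snd (a := fun x => a x ^ 2) (b := fun x => 2 * (a x * b x))
      ha.integrable_sq hab hξ hmean,
    integral_prod_mul (fun x => b x ^ 2) (fun s => s ^ 2), hvar, mul_one]

end MeasureTheory

theorem sub_sq_le_four_of_mem_Icc {x y : ℝ} (hx : x ∈ Set.Icc (-1 : ℝ) 1)
    (hy : y ∈ Set.Icc (-1 : ℝ) 1) : (x - y) ^ 2 ≤ 4 := by
  obtain ⟨hx₁, hx₂⟩ := hx
  obtain ⟨hy₁, hy₂⟩ := hy
  nlinarith

theorem sq_add_four_mul_mul_le {u v γ : ℝ} (hu₀ : 0 ≤ u) (hu : u ≤ 4) (hv : v ≤ 1 / γ)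
    (hγ₀ : 0 < γ) (hγ₁ : γ ≤ 1) : u ^ 2 + 4 * u * v ≤ 8 / γ * u := by
  have hγ : 1 ≤ 1 / γ := by rw [le_div_iff₀ hγ₀]; linarith
  calc u ^ 2 + 4 * u * v ≤ 4 * u * (1 / γ) + 4 * u * (1 / γ) := by gcongr; nlinarith
    _ = 8 / γ * u := by ring

theorem bernstein_heteroscedastic_regression_general
    {𝒳 : Type*} [MeasurableSpace 𝒳]
    (μ : Measure 𝒳) [IsProbabilityMeasure μ]
    (ρ : Measure ℝ) [IsProbabilityMeasure ρ]
    (hρmean : ∫ s, s ∂ρ = 0) (hρvar : ∫ s, s ^ 2 ∂ρ = 1)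
    (fstar : 𝒳 → ℝ) (hfstar : Measurable fstar) (hfstar1 : ∀ x, fstar x ∈ Set.Icc (-1 : ℝ) 1)
    (σsq : 𝒳 → ℝ) (hσsq : Measurable σsq)
    (γ : ℝ) (hγ0 : 0 < γ) (hγ1 : γ ≤ 1)
    (hσsqle : ∀ x, σsq x ≤ 1 / γ)
    (f : 𝒳 → ℝ) (hf : Measurable f) (hf1 : ∀ x, f x ∈ Set.Icc (-1 : ℝ) 1) :
    (∫ q : 𝒳 × ℝ,
        ((fstar q.1 + Real.sqrt (σsq q.1) * q.2 - f q.1) ^ 2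
          - (fstar q.1 + Real.sqrt (σsq q.1) * q.2 - fstar q.1) ^ 2) ^ 2 ∂(μ.prod ρ))
      - (∫ q : 𝒳 × ℝ,
          ((fstar q.1 + Real.sqrt (σsq q.1) * q.2 - f q.1) ^ 2
            - (fstar q.1 + Real.sqrt (σsq q.1) * q.2 - fstar q.1) ^ 2) ∂(μ.prod ρ)) ^ 2
      ≤ (8 / γ) * ∫ q : 𝒳 × ℝ,
          ((fstar q.1 + Real.sqrt (σsq q.1) * q.2 - f q.1) ^ 2
            - (fstar q.1 + Real.sqrt (σsq q.1) * q.2 - fstar q.1) ^ 2) ∂(μ.prod ρ) := by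
  have hg : ∀ x, (fstar x - f x) ^ 2 ≤ 4 := fun x => sub_sq_le_four_of_mem_Icc (hfstar1 x) (hf1 x)
  have hs : ∀ x, √(σsq x) ^ 2 ≤ 1 / γ := fun x =>
    (Real.le_sqrt (Real.sqrt_nonneg _) (by positivity)).1 (Real.sqrt_le_sqrt (hσsqle x))
  have ha : ∀ p, MemLp (fun x => (fstar x - f x) ^ 2) p μ := fun p =>
    .of_bound ((hfstar.sub hf).pow_const 2).aestronglyMeasurable 4
      (ae_of_all _ fun x => by simpa using hg x)
  have hb : ∀ p, MemLp (fun x => 2 * (fstar x - f x) * √(σsq x)) p μ := fun p =>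
    .of_bound ((measurable_const.mul (hfstar.sub hf)).mul hσsq.sqrt).aestronglyMeasurable
      √(4 * 4 * (1 / γ)) (ae_of_all _ fun x => Real.abs_le_sqrt <| by
        rw [mul_pow, mul_pow]; gcongr; exacts [by norm_num, hg x, hs x])
  have hξ : Integrable (fun s : ℝ => s) ρ :=
    integrable_id_of_integrable_sq (.of_integral_ne_zero (by simp [hρvar]))
  have hΔ : ∀ q : 𝒳 × ℝ, (fstar q.1 + √(σsq q.1) * q.2 - f q.1) ^ 2
      - (fstar q.1 + √(σsq q.1) * q.2 - fstar q.1) ^ 2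
      = (fstar q.1 - f q.1) ^ 2 + 2 * (fstar q.1 - f q.1) * √(σsq q.1) * q.2 := fun q => by ring
  simp_rw [hΔ]
  rw [integral_prod_sq_add_mul_snd (ha 2) (hb 2) hρmean hρvar,
    integral_prod_add_mul_snd ((ha 1).integrable le_rfl) ((hb 1).integrable le_rfl) hξ hρmean,
    ← integral_add (ha 2).integrable_sq (hb 2).integrable_sq, ← integral_const_mul]
  refine (sub_le_self _ (sq_nonneg _)).trans <| integral_mono
    ((ha 2).integrable_sq.add (hb 2).integrable_sq) (((ha 1).integrable le_rfl).const_mul _)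
    fun x => ?_
  linear_combination sq_add_four_mul_mul_le (sq_nonneg _) (hg x) (hs x) hγ0 hγ1

/-- Bernstein condition for bounded heteroscedastic regression: with
`y = f*(x) + √(σ*²(x))·ξ` and `Δ(x,ξ) = (y − f x)² − (y − f* x)²` on `(𝒳 × ℝ, μ ⊗ ρ)`,
if `0 < σ*²(x) ≤ 1/γ` then `Var[Δ] ≤ (8/γ)·E[Δ]`. -/
theorem bernstein_heteroscedastic_regression
    {𝒳 : Type*} [MeasurableSpace 𝒳]
    (μ : Measure 𝒳) [IsProbabilityMeasure μ]
    (c₂ : ℝ) (hc₂ : 1 ≤ c₂)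
    (ρ : Measure ℝ) [IsProbabilityMeasure ρ]
    (hρsupp : ∀ᵐ s ∂ρ, s ∈ Set.Icc (-c₂) c₂)
    (hρmean : ∫ s, s ∂ρ = 0) (hρvar : ∫ s, s ^ 2 ∂ρ = 1)
    (fstar : 𝒳 → ℝ) (hfstar : Measurable fstar) (hfstar1 : ∀ x, fstar x ∈ Set.Icc (-1 : ℝ) 1)
    (σsq : 𝒳 → ℝ) (hσsq : Measurable σsq)
    (γ : ℝ) (hγ0 : 0 < γ) (hγ1 : γ ≤ 1)
    (hσsqpos : ∀ x, 0 < σsq x) (hσsqle : ∀ x, σsq x ≤ 1 / γ)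
    (f : 𝒳 → ℝ) (hf : Measurable f) (hf1 : ∀ x, f x ∈ Set.Icc (-1 : ℝ) 1) :
    (∫ q : 𝒳 × ℝ,
        ((fstar q.1 + Real.sqrt (σsq q.1) * q.2 - f q.1) ^ 2
          - (fstar q.1 + Real.sqrt (σsq q.1) * q.2 - fstar q.1) ^ 2) ^ 2 ∂(μ.prod ρ))
      - (∫ q : 𝒳 × ℝ,
          ((fstar q.1 + Real.sqrt (σsq q.1) * q.2 - f q.1) ^ 2
            - (fstar q.1 + Real.sqrt (σsq q.1) * q.2 - fstar q.1) ^ 2) ∂(μ.prod ρ)) ^ 2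
      ≤ (8 / γ) * ∫ q : 𝒳 × ℝ,
          ((fstar q.1 + Real.sqrt (σsq q.1) * q.2 - f q.1) ^ 2
            - (fstar q.1 + Real.sqrt (σsq q.1) * q.2 - fstar q.1) ^ 2) ∂(μ.prod ρ) :=
  bernstein_heteroscedastic_regression_general μ ρ hρmean hρvar fstar hfstar hfstar1 σsq hσsq γ hγ0
    hγ1 hσsqle f hf hf1
end

section
/- Balanceable Bernstein condition for weighted heteroscedastic regression: let 0 < c₃ < 1, 0 < γ ≤ 1, suppose c₃ ≤ σ*²(x) ≤ 1/γ for all x, let f : 𝒳 → [−1,1] be measurable, and set C = 1/(2(1 + 4/c₃)). With y = f*(x) + √(σ*²(x))·ξ, the weighted excess squared loss Z(x,ξ) = C·((y − f(x))² − (y − f*(x))²)/σ*²(x) on (𝒳 × ℝ, μ ⊗ ρ) satisfies Var[Z] ≤ E[Z]. -/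
/-!
Write `d = f* − f` and `C = 1/(2(1 + 4/c₃))`. Since `y − f* = √σ*² ξ`, the weighted excess loss is
affine in the noise, `Z = a(x) + b(x) ξ` with `a = C d²/σ*²` and `b = 2 C d/√σ*²`. As `ξ` has mean `0`
and second moment `1`, `E[Z] = E[a]` and `E[Z²] = E[a² + b²]`, and
`a² + b² = a · C (d²/σ*² + 4) ≤ a` because `d² ≤ 4`, `σ*² ≥ c₃` and `C (4/c₃ + 4) ≤ 1`.
Hence `Var[Z] ≤ E[Z²] ≤ E[Z]`.
-/

open MeasureTheory

lemma abs_le_one_of_sq_add_sq_le {a b : ℝ} (h : a ^ 2 + b ^ 2 ≤ a) : |a| ≤ 1 ∧ |b| ≤ 1 := by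
  have ha : 0 ≤ a := by nlinarith [sq_nonneg b, sq_nonneg a]
  have ha1 : a ≤ 1 := by nlinarith [sq_nonneg b]
  refine ⟨abs_le.2 ⟨by linarith, ha1⟩, abs_le_one_iff_mul_self_le_one.2 ?_⟩
  nlinarith [sq_nonneg a]

namespace MeasureTheory

variable {𝒳 : Type*} [MeasurableSpace 𝒳] {μ : Measure 𝒳} {ρ : Measure ℝ}

lemma integrable_sq_of_integral_sq_eq_one (hvar : ∫ s, s ^ 2 ∂ρ = 1) :
    Integrable (fun s : ℝ => s ^ 2) ρ :=
  Integrable.of_integral_ne_zero (by rw [hvar]; exact one_ne_zero)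

lemma integrable_id_of_integral_sq_eq_one [IsFiniteMeasure ρ] (hvar : ∫ s, s ^ 2 ∂ρ = 1) :
    Integrable (fun s : ℝ => s) ρ :=
  ((memLp_two_iff_integrable_sq aestronglyMeasurable_id).2
    (integrable_sq_of_integral_sq_eq_one hvar)).integrable one_le_two

variable [IsFiniteMeasure μ] [IsProbabilityMeasure ρ] {a b : 𝒳 → ℝ}

lemma integral_prod_affine (ha : Integrable a μ) (hb : Integrable b μ)
    (hmean : ∫ s, s ∂ρ = 0) (hvar : ∫ s, s ^ 2 ∂ρ = 1) :
    ∫ q, a q.1 + b q.1 * q.2 ∂(μ.prod ρ) = ∫ x, a x ∂μ := by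
  rw [integral_add (ha.comp_fst ρ) (hb.mul_prod (integrable_id_of_integral_sq_eq_one hvar)),
    integral_fun_fst, integral_prod_mul b (fun s => s), hmean]
  simp

lemma integral_prod_affine_sq (ha : MemLp a 2 μ) (hb : MemLp b 2 μ)
    (hmean : ∫ s, s ∂ρ = 0) (hvar : ∫ s, s ^ 2 ∂ρ = 1) :
    ∫ q, (a q.1 + b q.1 * q.2) ^ 2 ∂(μ.prod ρ) = ∫ x, a x ^ 2 + b x ^ 2 ∂μ := by
  have ha2 : Integrable (fun q : 𝒳 × ℝ => a q.1 ^ 2) (μ.prod ρ) := ha.integrable_sq.comp_fst ρ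
  have hab : Integrable (fun q : 𝒳 × ℝ => 2 * a q.1 * b q.1 * q.2) (μ.prod ρ) :=
    (((ha.integrable_mul hb).const_mul 2).mul_prod
      (integrable_id_of_integral_sq_eq_one hvar)).congr
      (.of_forall fun q => by simp only [Pi.mul_apply]; ring)
  have hb2 : Integrable (fun q : 𝒳 × ℝ => b q.1 ^ 2 * q.2 ^ 2) (μ.prod ρ) :=
    hb.integrable_sq.mul_prod (integrable_sq_of_integral_sq_eq_one hvar)
  have hexpand : ∀ q : 𝒳 × ℝ, (a q.1 + b q.1 * q.2) ^ 2
      = a q.1 ^ 2 + 2 * a q.1 * b q.1 * q.2 + b q.1 ^ 2 * q.2 ^ 2 := fun q => by ring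
  simp only [hexpand]
  have ha2b : Integrable (fun q : 𝒳 × ℝ => a q.1 ^ 2 + 2 * a q.1 * b q.1 * q.2) (μ.prod ρ) :=
    ha2.add hab
  rw [integral_add ha2b hb2, integral_add ha2 hab, integral_fun_fst (fun x => a x ^ 2),
    integral_prod_mul (fun x => 2 * a x * b x) (fun s => s),
    integral_prod_mul (fun x => b x ^ 2) (fun s => s ^ 2), hmean, hvar,
    integral_add ha.integrable_sq hb.integrable_sq]
  simp

lemma integral_sq_sub_sq_integral_prod_affine_le (ha : AEStronglyMeasurable a μ)
    (hb : AEStronglyMeasurable b μ) (hab : ∀ x, a x ^ 2 + b x ^ 2 ≤ a x)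
    (hmean : ∫ s, s ∂ρ = 0) (hvar : ∫ s, s ^ 2 ∂ρ = 1) :
    (∫ q, (a q.1 + b q.1 * q.2) ^ 2 ∂(μ.prod ρ)) - (∫ q, a q.1 + b q.1 * q.2 ∂(μ.prod ρ)) ^ 2
      ≤ ∫ q, a q.1 + b q.1 * q.2 ∂(μ.prod ρ) := by
  have ha2 : MemLp a 2 μ :=
    .of_bound ha 1 (.of_forall fun x => (abs_le_one_of_sq_add_sq_le (hab x)).1)
  have hb2 : MemLp b 2 μ :=
    .of_bound hb 1 (.of_forall fun x => (abs_le_one_of_sq_add_sq_le (hab x)).2)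
  rw [integral_prod_affine_sq ha2 hb2 hmean hvar,
    integral_prod_affine (ha2.integrable one_le_two) (hb2.integrable one_le_two) hmean hvar]
  have hsecond : ∫ x, a x ^ 2 + b x ^ 2 ∂μ ≤ ∫ x, a x ∂μ :=
    integral_mono (ha2.integrable_sq.add hb2.integrable_sq) (ha2.integrable one_le_two) hab
  linarith [sq_nonneg (∫ x, a x ∂μ)]

end MeasureTheory

lemma weighted_excess_sq_loss_eq {σ : ℝ} (hσ : 0 < σ) (C fs fv s : ℝ) :
    C * (((fs + √σ * s - fv) ^ 2 - (fs + √σ * s - fs) ^ 2) / σ)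
      = C * (fs - fv) ^ 2 / σ + 2 * C * (fs - fv) / √σ * s := by
  field_simp
  linear_combination 2 * C * (fs - fv) * s * Real.sq_sqrt hσ.le

lemma bernstein_const_mul_le_one {c : ℝ} (hc0 : 0 < c) (hc2 : c ≤ 2) :
    1 / (2 * (1 + 4 / c)) * (4 / c + 4) ≤ 1 := by
  have h : 2 ≤ 4 / c := by rw [le_div_iff₀ hc0]; linarith
  rw [one_div_mul_eq_div, div_le_one (by positivity)]
  linarith

lemma weighted_excess_sq_loss_sq_add_sq_le {c σ d : ℝ} (hc0 : 0 < c) (hc2 : c ≤ 2) (hcσ : c ≤ σ)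
    (hd : d ^ 2 ≤ 4) :
    (1 / (2 * (1 + 4 / c)) * d ^ 2 / σ) ^ 2 + (2 * (1 / (2 * (1 + 4 / c))) * d / √σ) ^ 2
      ≤ 1 / (2 * (1 + 4 / c)) * d ^ 2 / σ := by
  set C := 1 / (2 * (1 + 4 / c))
  have hσ : 0 < σ := hc0.trans_le hcσ
  have hC : 0 < C := by positivity
  have hu : d ^ 2 / σ ≤ 4 / c := div_le_div₀ (by norm_num) hd hc0 hcσ
  have hlhs : (C * d ^ 2 / σ) ^ 2 + (2 * C * d / √σ) ^ 2
      = C * (d ^ 2 / σ) * (C * (d ^ 2 / σ + 4)) := by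
    rw [div_pow (2 * C * d), Real.sq_sqrt hσ.le]
    field_simp
    ring
  rw [hlhs, mul_div_assoc]
  refine mul_le_of_le_one_right (by positivity) ?_
  calc C * (d ^ 2 / σ + 4) ≤ C * (4 / c + 4) := by gcongr
    _ ≤ 1 := bernstein_const_mul_le_one hc0 hc2

theorem balanceable_bernstein_heteroscedastic_regression_general
    {𝒳 : Type*} [MeasurableSpace 𝒳]
    (μ : Measure 𝒳) [IsProbabilityMeasure μ]
    (ρ : Measure ℝ) [IsProbabilityMeasure ρ]
    (hρmean : ∫ s, s ∂ρ = 0) (hρvar : ∫ s, s ^ 2 ∂ρ = 1)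
    (fstar : 𝒳 → ℝ) (hfstar : Measurable fstar) (hfstar1 : ∀ x, fstar x ∈ Set.Icc (-1 : ℝ) 1)
    (σsq : 𝒳 → ℝ) (hσsq : Measurable σsq)
    (c₃ : ℝ) (hc₃0 : 0 < c₃) (hc₃1 : c₃ < 1)
    (hσsqlb : ∀ x, c₃ ≤ σsq x)
    (f : 𝒳 → ℝ) (hf : Measurable f) (hf1 : ∀ x, f x ∈ Set.Icc (-1 : ℝ) 1) :
    (∫ q : 𝒳 × ℝ,
        ((1 / (2 * (1 + 4 / c₃))) *
          (((fstar q.1 + Real.sqrt (σsq q.1) * q.2 - f q.1) ^ 2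
            - (fstar q.1 + Real.sqrt (σsq q.1) * q.2 - fstar q.1) ^ 2) / σsq q.1)) ^ 2 ∂(μ.prod ρ))
      - (∫ q : 𝒳 × ℝ,
          (1 / (2 * (1 + 4 / c₃))) *
            (((fstar q.1 + Real.sqrt (σsq q.1) * q.2 - f q.1) ^ 2
              - (fstar q.1 + Real.sqrt (σsq q.1) * q.2 - fstar q.1) ^ 2) / σsq q.1) ∂(μ.prod ρ)) ^ 2
      ≤ ∫ q : 𝒳 × ℝ,
          (1 / (2 * (1 + 4 / c₃))) *
            (((fstar q.1 + Real.sqrt (σsq q.1) * q.2 - f q.1) ^ 2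
              - (fstar q.1 + Real.sqrt (σsq q.1) * q.2 - fstar q.1) ^ 2) / σsq q.1) ∂(μ.prod ρ) := by
  have hσ : ∀ x, 0 < σsq x := fun x => hc₃0.trans_le (hσsqlb x)
  have hdiff : ∀ x, (fstar x - f x) ^ 2 ≤ 4 := fun x => by
    obtain ⟨hfstar₀, hfstar₁⟩ := hfstar1 x
    obtain ⟨hf₀, hf₁⟩ := hf1 x
    nlinarith
  simp only [weighted_excess_sq_loss_eq (hσ _)]
  exact integral_sq_sub_sq_integral_prod_affine_le
    (Measurable.aestronglyMeasurable (by fun_prop)) (Measurable.aestronglyMeasurable (by fun_prop))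
    (fun x => weighted_excess_sq_loss_sq_add_sq_le hc₃0 (by linarith) (hσsqlb x) (hdiff x))
    hρmean hρvar

/-- Balanceable Bernstein condition for weighted heteroscedastic regression: with
`C = 1/(2(1 + 4/c₃))`, `y = f*(x) + √(σ*²(x))·ξ` and
`Z(x,ξ) = C·((y − f x)² − (y − f* x)²)/σ*²(x)` on `(𝒳 × ℝ, μ ⊗ ρ)`,
if `c₃ ≤ σ*²(x) ≤ 1/γ` then `Var[Z] ≤ E[Z]`. -/
theorem balanceable_bernstein_heteroscedastic_regression
    {𝒳 : Type*} [MeasurableSpace 𝒳]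
    (μ : Measure 𝒳) [IsProbabilityMeasure μ]
    (c₂ : ℝ) (hc₂ : 1 ≤ c₂)
    (ρ : Measure ℝ) [IsProbabilityMeasure ρ]
    (hρsupp : ∀ᵐ s ∂ρ, s ∈ Set.Icc (-c₂) c₂)
    (hρmean : ∫ s, s ∂ρ = 0) (hρvar : ∫ s, s ^ 2 ∂ρ = 1)
    (fstar : 𝒳 → ℝ) (hfstar : Measurable fstar) (hfstar1 : ∀ x, fstar x ∈ Set.Icc (-1 : ℝ) 1)
    (σsq : 𝒳 → ℝ) (hσsq : Measurable σsq)
    (c₃ γ : ℝ) (hc₃0 : 0 < c₃) (hc₃1 : c₃ < 1) (hγ0 : 0 < γ) (hγ1 : γ ≤ 1)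
    (hσsqlb : ∀ x, c₃ ≤ σsq x) (hσsqub : ∀ x, σsq x ≤ 1 / γ)
    (f : 𝒳 → ℝ) (hf : Measurable f) (hf1 : ∀ x, f x ∈ Set.Icc (-1 : ℝ) 1) :
    (∫ q : 𝒳 × ℝ,
        ((1 / (2 * (1 + 4 / c₃))) *
          (((fstar q.1 + Real.sqrt (σsq q.1) * q.2 - f q.1) ^ 2
            - (fstar q.1 + Real.sqrt (σsq q.1) * q.2 - fstar q.1) ^ 2) / σsq q.1)) ^ 2 ∂(μ.prod ρ))
      - (∫ q : 𝒳 × ℝ,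
          (1 / (2 * (1 + 4 / c₃))) *
            (((fstar q.1 + Real.sqrt (σsq q.1) * q.2 - f q.1) ^ 2
              - (fstar q.1 + Real.sqrt (σsq q.1) * q.2 - fstar q.1) ^ 2) / σsq q.1) ∂(μ.prod ρ)) ^ 2
      ≤ ∫ q : 𝒳 × ℝ,
          (1 / (2 * (1 + 4 / c₃))) *
            (((fstar q.1 + Real.sqrt (σsq q.1) * q.2 - f q.1) ^ 2
              - (fstar q.1 + Real.sqrt (σsq q.1) * q.2 - fstar q.1) ^ 2) / σsq q.1) ∂(μ.prod ρ) :=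
  balanceable_bernstein_heteroscedastic_regression_general μ ρ hρmean hρvar fstar hfstar hfstar1 σsq
    hσsq c₃ hc₃0 hc₃1 hσsqlb f hf hf1
end

section
/- Bernstein-type condition for the Gaussian negative log-likelihood loss: there is a universal constant κ > 0 such that the following holds. Let 0 < c₃ < 1, 0 < γ ≤ 1, let σ², σ*² : 𝒳 → [c₃, 1/γ] and f : 𝒳 → [−1,1] be measurable, and assume the normalized residuals are uniformly bounded: (f*(x) − f(x) + s·√(σ*²(x)))² ≤ 4·c₂²·σ²(x) for every x ∈ 𝒳 and every s ∈ [−c₂, c₂]. With y = f*(x) + √(σ*²(x))·ξ, set Z(x,ξ) = (log σ²(x) + (y − f(x))²/σ²(x)) − (log σ*²(x) + (y − f*(x))²/σ*²(x)) on (𝒳 × ℝ, μ ⊗ ρ). Then Var[Z] ≤ κ·(C + c₂² + 1/c₃²)·E[Z], where C = 5c₂² + 2·log(c₂/γ). -/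
/-!
Write `t = σ*²/σ²` and `d = f* - f`. For fixed `x` the excess loss is a quadratic polynomial
`Z = m + A ξ + B (ξ² - 1)` in the noise, with `m = t - 1 - log t + d²/σ²`,
`A = 2 d σ*/σ²` and `B = t - 1`; as `ξ` is centred with unit variance, `E[Z | x] = m`.
The residual bound forces `t ≤ 4` and `d²/σ² ≤ 4 c₂²`. On `(0, 4]` the function `t - 1 - log t`
dominates `(t - 1)²/9`, so `A²` and `B²` are `O(m)`, while the variance bounds give
`m = O(C + c₂² + 1/c₃²)`. Hence `E[Z² | x] = O((C + c₂² + 1/c₃²) m)`, and integrating in `x`,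
`Var Z ≤ E Z² ≤ κ (C + c₂² + 1/c₃²) E Z`.
-/

open MeasureTheory Real Set

theorem sq_sub_one_le_nine_mul_sub_one_sub_log {t : ℝ} (ht : 0 < t) (ht4 : t ≤ 4) :
    (t - 1) ^ 2 ≤ 9 * (t - 1 - log t) := by
  -- `log t = 2 log √t ≤ 2 (√t - 1)` gives `t - 1 - log t ≥ (√t - 1)²`, and `(√t + 1)² ≤ 9`
  set u := √t
  have hu : u ^ 2 = t := sq_sqrt ht.le
  have hu0 : 0 < u := sqrt_pos.2 ht
  have hu2 : u ≤ 2 := by nlinarith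
  have hlog : log t = 2 * log u := by rw [← hu, log_pow]; norm_num
  have hlogu : log u ≤ u - 1 := log_le_sub_one_of_pos hu0
  rw [hlog, ← hu]
  nlinarith [sq_nonneg (u - 1), mul_nonneg (sq_nonneg (u - 1)) (by linarith : (0 : ℝ) ≤ 2 - u)]

section BoundedNoise

variable {ρ : Measure ℝ} {c : ℝ}

theorem integrable_pow_of_ae_mem_Icc [IsFiniteMeasure ρ] (hρ : ∀ᵐ s ∂ρ, s ∈ Icc (-c) c)
    (k : ℕ) : Integrable (fun s => s ^ k) ρ :=
  Integrable.of_bound (by fun_prop) (c ^ k) <| by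
    filter_upwards [hρ] with s hs
    rw [norm_pow]
    exact pow_le_pow_left₀ (norm_nonneg s) (abs_le.2 hs) k

theorem integral_add_mul_add_mul_sq_sub_one [IsProbabilityMeasure ρ]
    (h1 : Integrable (fun s => s) ρ) (h2 : Integrable (fun s => s ^ 2) ρ)
    (hmean : ∫ s, s ∂ρ = 0) (hvar : ∫ s, s ^ 2 ∂ρ = 1) (m A B : ℝ) :
    ∫ s, (m + A * s + B * (s ^ 2 - 1)) ∂ρ = m := by
  have hlin : Integrable (fun s => m + A * s) ρ := (integrable_const m).add (h1.const_mul A)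
  have hquad : Integrable (fun s => B * (s ^ 2 - 1)) ρ := (h2.sub (integrable_const 1)).const_mul B
  rw [integral_add hlin hquad, integral_add (integrable_const m) (h1.const_mul A),
    integral_const_mul, integral_const_mul, integral_sub h2 (integrable_const 1), hmean, hvar]
  simp

theorem integral_sq_add_mul_add_mul_sq_sub_one_le [IsProbabilityMeasure ρ]
    (hρ : ∀ᵐ s ∂ρ, s ∈ Icc (-c) c) (hvar : ∫ s, s ^ 2 ∂ρ = 1) (m A B : ℝ) :
    ∫ s, (m + A * s + B * (s ^ 2 - 1)) ^ 2 ∂ρ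
      ≤ 2 * m ^ 2 + 4 * A ^ 2 + 4 * (c ^ 2 + 1) * B ^ 2 := by
  have hg : Integrable
      (fun s => (2 * m ^ 2 + 4 * B ^ 2) + (4 * A ^ 2 + 4 * c ^ 2 * B ^ 2) * s ^ 2) ρ :=
    (integrable_const _).add ((integrable_pow_of_ae_mem_Icc hρ 2).const_mul _)
  have hle : ∀ᵐ s ∂ρ, (m + A * s + B * (s ^ 2 - 1)) ^ 2
      ≤ (2 * m ^ 2 + 4 * B ^ 2) + (4 * A ^ 2 + 4 * c ^ 2 * B ^ 2) * s ^ 2 := by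
    filter_upwards [hρ] with s hs
    -- `(s² - 1)² ≤ s⁴ + 1 ≤ c² s² + 1`
    have hs2 : s ^ 2 ≤ c ^ 2 := sq_le_sq' hs.1 hs.2
    nlinarith [sq_nonneg (m - A * s - B * (s ^ 2 - 1)), sq_nonneg (A * s - B * (s ^ 2 - 1)),
      mul_le_mul_of_nonneg_left hs2 (mul_nonneg (sq_nonneg B) (sq_nonneg s))]
  calc ∫ s, (m + A * s + B * (s ^ 2 - 1)) ^ 2 ∂ρ
      ≤ ∫ s, (2 * m ^ 2 + 4 * B ^ 2) + (4 * A ^ 2 + 4 * c ^ 2 * B ^ 2) * s ^ 2 ∂ρ :=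
        integral_mono_ae (hg.mono' (by fun_prop) (by
          filter_upwards [hle] with s hs
          rwa [norm_pow, norm_eq_abs, sq_abs])) hg hle
    _ = 2 * m ^ 2 + 4 * A ^ 2 + 4 * (c ^ 2 + 1) * B ^ 2 := by
        rw [integral_add (integrable_const _) ((integrable_pow_of_ae_mem_Icc hρ 2).const_mul _),
          integral_const_mul, hvar, integral_const, probReal_univ, smul_eq_mul]
        ring

end BoundedNoise

theorem integral_sq_sub_sq_integral_prod_le {α β : Type*} [MeasurableSpace α] [MeasurableSpace β]
    {μ : Measure α} {ν : Measure β} [SFinite μ] [SFinite ν] {Z : α × β → ℝ} {K : ℝ}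
    (hZ : Integrable Z (μ.prod ν)) (hZ2 : Integrable (fun q => Z q ^ 2) (μ.prod ν))
    (h : ∀ x, ∫ y, Z (x, y) ^ 2 ∂ν ≤ K * ∫ y, Z (x, y) ∂ν) :
    ∫ q, Z q ^ 2 ∂μ.prod ν - (∫ q, Z q ∂μ.prod ν) ^ 2 ≤ K * ∫ q, Z q ∂μ.prod ν := by
  refine (sub_le_self _ (sq_nonneg _)).trans ?_
  rw [integral_prod _ hZ2, integral_prod _ hZ, ← integral_const_mul]
  exact integral_mono hZ2.integral_prod_left (hZ.integral_prod_left.const_mul K) h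

namespace GaussianNLL

/-- With `a = f*(x)`, `b = f(x)`, `v = σ²(x)` and `w = σ*²(x)`, `excess a b v w ξ` is `Z(x, ξ)`. -/
noncomputable def excess (a b v w s : ℝ) : ℝ :=
  (log v + (a + √w * s - b) ^ 2 / v) - (log w + (a + √w * s - a) ^ 2 / w)

/-- Twice the Kullback–Leibler divergence from `𝒩(a, w)` to `𝒩(b, v)`. -/
noncomputable def twiceKL (a b v w : ℝ) : ℝ :=
  w / v - 1 - log (w / v) + (a - b) ^ 2 / v

variable {a b v w : ℝ}

theorem excess_eq (hv : 0 < v) (hw : 0 < w) (s : ℝ) :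
    excess a b v w s
      = twiceKL a b v w + 2 * (a - b) * √w / v * s + (w / v - 1) * (s ^ 2 - 1) := by
  have hsq : √w ^ 2 = w := sq_sqrt hw.le
  rw [excess, twiceKL, log_div hw.ne' hv.ne']
  field_simp
  linear_combination (w - v) * s ^ 2 * hsq

theorem sq_div_le_twiceKL (hv : 0 < v) (hw : 0 < w) : (a - b) ^ 2 / v ≤ twiceKL a b v w := by
  have := log_le_sub_one_of_pos (div_pos hw hv)
  rw [twiceKL]
  linarith

theorem twiceKL_nonneg (hv : 0 < v) (hw : 0 < w) : 0 ≤ twiceKL a b v w :=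
  (div_nonneg (sq_nonneg _) hv.le).trans (sq_div_le_twiceKL hv hw)

theorem sq_linear_coeff_le (hv : 0 < v) (hw : 0 < w) (hw4 : w ≤ 4 * v) :
    (2 * (a - b) * √w / v) ^ 2 ≤ 16 * twiceKL a b v w := by
  have hsq : (2 * (a - b) * √w / v) ^ 2 = 4 * ((a - b) ^ 2 / v) * (w / v) := by
    rw [div_pow, mul_pow, mul_pow, sq_sqrt hw.le]
    field_simp
    ring
  have ht4 : w / v ≤ 4 := (div_le_iff₀ hv).2 hw4
  rw [hsq]
  nlinarith [sq_div_le_twiceKL (a := a) (b := b) hv hw, div_nonneg (sq_nonneg (a - b)) hv.le,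
    div_pos hw hv]

theorem sq_quadratic_coeff_le (hv : 0 < v) (hw : 0 < w) (hw4 : w ≤ 4 * v) :
    (w / v - 1) ^ 2 ≤ 9 * twiceKL a b v w := by
  have := sq_sub_one_le_nine_mul_sub_one_sub_log (div_pos hw hv) ((div_le_iff₀ hv).2 hw4)
  have := div_nonneg (sq_nonneg (a - b)) hv.le
  rw [twiceKL]
  linarith

theorem le_four_mul_of_residual {c : ℝ} (hc : 0 < c) (hw : 0 ≤ w)
    (hres : ∀ s ∈ Icc (-c) c, (a - b + s * √w) ^ 2 ≤ 4 * c ^ 2 * v) : w ≤ 4 * v := by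
  -- average the residual bound at `s = c` and `s = -c`
  have hplus := hres c ⟨by linarith, le_rfl⟩
  have hminus := hres (-c) ⟨le_rfl, by linarith⟩
  have hsq : √w ^ 2 = w := sq_sqrt hw
  have : c ^ 2 * w ≤ c ^ 2 * (4 * v) := by nlinarith [sq_nonneg (a - b)]
  exact le_of_mul_le_mul_left this (by positivity)

theorem twiceKL_le {c c₃ γ : ℝ} (hc : 1 ≤ c) (hc₃ : 0 < c₃) (hγ : 0 < γ) (hγ1 : γ ≤ 1)
    (hv : 0 < v) (hvγ : v ≤ 1 / γ) (hw : c₃ ≤ w) (hw4 : w ≤ 4 * v)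
    (hd : (a - b) ^ 2 ≤ 4 * c ^ 2 * v) :
    twiceKL a b v w ≤ 2 * ((5 * c ^ 2 + 2 * log (c / γ)) + c ^ 2 + 1 / c₃ ^ 2) := by
  have hratio : γ * c₃ ≤ w / v := by
    rw [le_div_iff₀ hv]
    nlinarith [mul_le_mul_of_nonneg_left ((le_div_iff₀ hγ).1 hvγ) hc₃.le]
  have hlog_ratio : log γ + log c₃ ≤ log (w / v) := by
    rw [← log_mul hγ.ne' hc₃.ne']
    exact log_le_log (by positivity) hratio
  have hlog_c₃ : -log c₃ ≤ 1 / c₃ ^ 2 := by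
    have := log_le_sub_one_of_pos (inv_pos.2 hc₃)
    rw [log_inv] at this
    have : c₃⁻¹ - 1 ≤ 1 / c₃ ^ 2 := by rw [one_div, ← inv_pow]; nlinarith [sq_nonneg (c₃⁻¹ - 1)]
    linarith
  have ht4 : w / v ≤ 4 := (div_le_iff₀ hv).2 hw4
  have hdv : (a - b) ^ 2 / v ≤ 4 * c ^ 2 := (div_le_iff₀ hv).2 hd
  have hlog_c : 0 ≤ log c := log_nonneg hc
  have hlog_γ : log γ ≤ 0 := log_nonpos hγ.le hγ1
  have hc₃sq : 0 < 1 / c₃ ^ 2 := by positivity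
  rw [twiceKL, log_div (by linarith) hγ.ne']
  nlinarith

theorem abs_excess_le {c c₃ M s : ℝ} (hc₃ : 0 < c₃) (hv : v ∈ Icc c₃ M) (hw : w ∈ Icc c₃ M)
    (hs : s ∈ Icc (-c) c) (hres : (a - b + s * √w) ^ 2 ≤ 4 * c ^ 2 * v) :
    |excess a b v w s| ≤ log M - log c₃ + 5 * c ^ 2 := by
  have hv0 : 0 < v := hc₃.trans_le hv.1
  have hw0 : 0 < w := hc₃.trans_le hw.1
  have hlog : |log v - log w| ≤ log M - log c₃ :=
    abs_sub_le_of_le_of_le (log_le_log hc₃ hv.1) (log_le_log hv0 hv.2)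
      (log_le_log hc₃ hw.1) (log_le_log hw0 hw.2)
  have hfit : (a + √w * s - b) ^ 2 / v ≤ 4 * c ^ 2 :=
    (div_le_iff₀ hv0).2 (by linarith [show a + √w * s - b = a - b + s * √w by ring])
  have hnoise : (a + √w * s - a) ^ 2 / w = s ^ 2 := by
    rw [add_sub_cancel_left, mul_pow, sq_sqrt hw0.le, mul_div_cancel_left₀ _ hw0.ne']
  have hs2 : s ^ 2 ≤ c ^ 2 := sq_le_sq' hs.1 hs.2
  have := div_nonneg (sq_nonneg (a + √w * s - b)) hv0.le
  rw [excess, hnoise, abs_le]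
  constructor <;> nlinarith [abs_le.1 hlog, sq_nonneg s]

section Noise

variable {ρ : Measure ℝ} [IsProbabilityMeasure ρ]

theorem integral_excess (hv : 0 < v) (hw : 0 < w)
    (h1 : Integrable (fun s => s) ρ) (h2 : Integrable (fun s => s ^ 2) ρ)
    (hmean : ∫ s, s ∂ρ = 0) (hvar : ∫ s, s ^ 2 ∂ρ = 1) :
    ∫ s, excess a b v w s ∂ρ = twiceKL a b v w := by
  simp_rw [excess_eq hv hw]
  exact integral_add_mul_add_mul_sq_sub_one h1 h2 hmean hvar _ _ _

theorem integral_excess_sq_le {c D : ℝ} (hc : 1 ≤ c) (hρ : ∀ᵐ s ∂ρ, s ∈ Icc (-c) c)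
    (hvar : ∫ s, s ^ 2 ∂ρ = 1) (hv : 0 < v) (hw : 0 < w) (hw4 : w ≤ 4 * v)
    (hD : 6 * c ^ 2 ≤ D) (hKL : twiceKL a b v w ≤ 2 * D) :
    ∫ s, excess a b v w s ^ 2 ∂ρ ≤ 27 * D * twiceKL a b v w := by
  simp_rw [excess_eq hv hw]
  refine (integral_sq_add_mul_add_mul_sq_sub_one_le hρ hvar _ _ _).trans ?_
  have hm := twiceKL_nonneg (a := a) (b := b) hv hw
  have hA := sq_linear_coeff_le (a := a) (b := b) hv hw hw4
  have hB := sq_quadratic_coeff_le (a := a) (b := b) hv hw hw4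
  nlinarith [mul_nonneg hm (by linarith : 0 ≤ 2 * D - twiceKL a b v w),
    mul_nonneg hm (by linarith : 0 ≤ D - 6 * c ^ 2),
    mul_le_mul_of_nonneg_left hB (by positivity : (0 : ℝ) ≤ c ^ 2 + 1),
    mul_nonneg hm (by nlinarith : (0 : ℝ) ≤ c ^ 2 - 1)]

end Noise

end GaussianNLL

open GaussianNLL

/-- Bernstein-type condition for the Gaussian negative log-likelihood loss: there is a universal
constant `κ > 0` such that, under uniformly bounded normalized residuals, the excess NLL
`Z` satisfies `Var[Z] ≤ κ·(C + c₂² + 1/c₃²)·E[Z]` with `C = 5c₂² + 2·log(c₂/γ)`. -/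
theorem bernstein_nll_loss :
    ∃ κ : ℝ, 0 < κ ∧
      ∀ (𝒳 : Type) [MeasurableSpace 𝒳]
        (μ : Measure 𝒳) [IsProbabilityMeasure μ]
        (c₂ : ℝ), 1 ≤ c₂ →
        ∀ (ρ : Measure ℝ) [IsProbabilityMeasure ρ],
        (∀ᵐ s ∂ρ, s ∈ Set.Icc (-c₂) c₂) →
        (∫ s, s ∂ρ) = 0 → (∫ s, s ^ 2 ∂ρ) = 1 →
        ∀ (fstar : 𝒳 → ℝ), Measurable fstar → (∀ x, fstar x ∈ Set.Icc (-1 : ℝ) 1) →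
        ∀ (c₃ γ : ℝ), 0 < c₃ → c₃ < 1 → 0 < γ → γ ≤ 1 →
        ∀ (σsq σstarsq : 𝒳 → ℝ), Measurable σsq → Measurable σstarsq →
        (∀ x, σsq x ∈ Set.Icc c₃ (1 / γ)) →
        (∀ x, σstarsq x ∈ Set.Icc c₃ (1 / γ)) →
        ∀ (f : 𝒳 → ℝ), Measurable f → (∀ x, f x ∈ Set.Icc (-1 : ℝ) 1) →
        (∀ x, ∀ s ∈ Set.Icc (-c₂) c₂,
          (fstar x - f x + s * Real.sqrt (σstarsq x)) ^ 2 ≤ 4 * c₂ ^ 2 * σsq x) →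
        (∫ q : 𝒳 × ℝ,
            ((Real.log (σsq q.1)
                + (fstar q.1 + Real.sqrt (σstarsq q.1) * q.2 - f q.1) ^ 2 / σsq q.1)
              - (Real.log (σstarsq q.1)
                + (fstar q.1 + Real.sqrt (σstarsq q.1) * q.2 - fstar q.1) ^ 2 / σstarsq q.1)) ^ 2
            ∂(μ.prod ρ))
          - (∫ q : 𝒳 × ℝ,
              ((Real.log (σsq q.1)
                  + (fstar q.1 + Real.sqrt (σstarsq q.1) * q.2 - f q.1) ^ 2 / σsq q.1)
                - (Real.log (σstarsq q.1)
                  + (fstar q.1 + Real.sqrt (σstarsq q.1) * q.2 - fstar q.1) ^ 2 / σstarsq q.1))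
              ∂(μ.prod ρ)) ^ 2
          ≤ κ * ((5 * c₂ ^ 2 + 2 * Real.log (c₂ / γ)) + c₂ ^ 2 + 1 / c₃ ^ 2) *
            ∫ q : 𝒳 × ℝ,
              ((Real.log (σsq q.1)
                  + (fstar q.1 + Real.sqrt (σstarsq q.1) * q.2 - f q.1) ^ 2 / σsq q.1)
                - (Real.log (σstarsq q.1)
                  + (fstar q.1 + Real.sqrt (σstarsq q.1) * q.2 - fstar q.1) ^ 2 / σstarsq q.1))
              ∂(μ.prod ρ) := by
  refine ⟨27, by norm_num, ?_⟩
  intro 𝒳 _ μ _ c₂ hc₂ ρ _ hρ hmean hvar fstar hfstar _ c₃ γ hc₃ _ hγ hγ1 σsq σstarsq hσ hσstar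
    hσb hσstarb f hf _ hres
  have hD : 6 * c₂ ^ 2 ≤ (5 * c₂ ^ 2 + 2 * log (c₂ / γ)) + c₂ ^ 2 + 1 / c₃ ^ 2 := by
    have : 0 ≤ log (c₂ / γ) := log_nonneg ((le_div_iff₀ hγ).2 (by linarith))
    have : 0 < 1 / c₃ ^ 2 := by positivity
    linarith
  have hpos : ∀ x, 0 < σsq x ∧ 0 < σstarsq x := fun x =>
    ⟨hc₃.trans_le (hσb x).1, hc₃.trans_le (hσstarb x).1⟩
  have hw4 : ∀ x, σstarsq x ≤ 4 * σsq x := fun x =>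
    le_four_mul_of_residual (by linarith) (hpos x).2.le (hres x)
  have hZ : MemLp (fun q : 𝒳 × ℝ => excess (fstar q.1) (f q.1) (σsq q.1) (σstarsq q.1) q.2) ⊤
      (μ.prod ρ) :=
    memLp_top_of_bound (by unfold excess; fun_prop) _ <| by
      filter_upwards [Measure.quasiMeasurePreserving_snd.ae hρ] with q hs
      exact abs_excess_le hc₃ (hσb q.1) (hσstarb q.1) hs (hres q.1 q.2 hs)
  refine integral_sq_sub_sq_integral_prod_le (hZ.integrable le_top)
    (hZ.mono_exponent le_top).integrable_sq fun x => ?_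
  have hKL := integral_excess (a := fstar x) (b := f x) (hpos x).1 (hpos x).2
    (by simpa using integrable_pow_of_ae_mem_Icc hρ 1) (integrable_pow_of_ae_mem_Icc hρ 2)
    hmean hvar
  have hsq := integral_excess_sq_le hc₂ hρ hvar (hpos x).1 (hpos x).2 (hw4 x) hD
    (twiceKL_le hc₂ hc₃ hγ hγ1 (hpos x).1 (hσb x).2 (hσstarb x).1 (hw4 x)
      (by simpa using hres x 0 ⟨by linarith, by linarith⟩))
  rw [← hKL] at hsq
  exact hsq
end

section
/- For every real number t > 0, log(1/t) ≥ 1 − t + (t − 1)² / (2·max(1, t)). -/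
/-- For every real `t > 0`, `log(1/t) ≥ 1 − t + (t − 1)² / (2·max(1, t))`. -/
theorem log_inv_ge_of_pos (t : ℝ) (ht : 0 < t) :
    Real.log (1 / t) ≥ 1 - t + (t - 1) ^ 2 / (2 * max 1 t) := by
  rcases le_total t 1 with h1 | h1
  · -- case t ≤ 1: max 1 t = 1; use ∫ₜ¹ x⁻¹ ≥ ∫ₜ¹ (2 - x)
    rw [max_eq_left h1]
    have hlog : Real.log (1 / t) = ∫ x in t..(1 : ℝ), x⁻¹ := by
      rw [integral_inv_of_pos ht one_pos]
    have hint : IntervalIntegrable (fun x : ℝ => x⁻¹) MeasureTheory.volume t 1 := by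
      apply intervalIntegral.intervalIntegrable_inv
      · intro x hx
        rw [Set.uIcc_of_le h1] at hx
        exact ne_of_gt (lt_of_lt_of_le ht hx.1)
      · exact continuousOn_id
    have hint2 : IntervalIntegrable (fun x : ℝ => 2 - x) MeasureTheory.volume t 1 :=
      (continuous_const.sub continuous_id).intervalIntegrable _ _
    have hmono : (∫ x in t..(1 : ℝ), (2 - x)) ≤ ∫ x in t..(1 : ℝ), x⁻¹ := by
      apply intervalIntegral.integral_mono_on h1 hint2 hint
      intro x hx
      have hx0 : 0 < x := lt_of_lt_of_le ht hx.1
      rw [← sub_nonneg]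
      have : x⁻¹ - (2 - x) = (x - 1) ^ 2 / x := by
        field_simp; ring
      rw [this]
      positivity
    have hval : (∫ x in t..(1 : ℝ), (2 - x)) = 2 * (1 - t) - (1 - t ^ 2) / 2 := by
      rw [intervalIntegral.integral_sub intervalIntegrable_const intervalIntegral.intervalIntegrable_id,
        intervalIntegral.integral_const, integral_id]
      simp [smul_eq_mul]; ring
    rw [hlog]
    have := hval ▸ hmono
    nlinarith [this]
  · -- case 1 ≤ t: use log t ≤ sinh (log t)
    rw [max_eq_right h1]
    have hlt : Real.log t ≤ Real.sinh (Real.log t) := by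
      rw [Real.self_le_sinh_iff]
      exact Real.log_nonneg h1
    rw [Real.sinh_log ht] at hlt
    have ht' : t ≠ 0 := ne_of_gt ht
    rw [one_div, Real.log_inv]
    rw [ge_iff_le, ← sub_nonneg]
    have key : -Real.log t - (1 - t + (t - 1) ^ 2 / (2 * t)) =
        (t - t⁻¹) / 2 - Real.log t := by
      field_simp
      ring
    rw [key]
    linarith
end

section
/- For every real number t > 0, log(1/t) ≥ 1 − t + (t − 1)² / (2·max(1, t²)). -/
/-! Below `1` the bound is the second partial sum of the series `-log (1 - x) = ∑ xⁿ⁺¹/(n+1)`,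
whose terms are nonnegative for `x = 1 - t ≥ 0`. Above `1` it follows from
`log t ≤ sinh (log t) = (t - t⁻¹)/2`, which beats the required bound by `(t - 1)³/(2t²) ≥ 0`. -/

open Finset Real

lemma sum_range_pow_div_le_neg_log_one_sub {x : ℝ} (h₀ : 0 ≤ x) (h₁ : x < 1) (n : ℕ) :
    ∑ i ∈ range n, x ^ (i + 1) / (i + 1) ≤ -log (1 - x) :=
  sum_le_hasSum _ (fun i _ ↦ by positivity)
    (hasSum_pow_div_log_of_abs_lt_one (by rwa [abs_of_nonneg h₀]))

lemma one_sub_add_sq_div_two_le_neg_log {t : ℝ} (ht : 0 < t) (ht₁ : t ≤ 1) :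
    1 - t + (t - 1) ^ 2 / 2 ≤ -log t := by
  have hsum : ∑ i ∈ range 2, (1 - t) ^ (i + 1) / (i + 1) = 1 - t + (t - 1) ^ 2 / 2 := by
    norm_num [sum_range_succ]
    ring
  have h := sum_range_pow_div_le_neg_log_one_sub (x := 1 - t) (by linarith) (by linarith) 2
  rwa [hsum, sub_sub_cancel] at h

lemma log_le_sub_inv_div_two {t : ℝ} (ht : 1 ≤ t) : log t ≤ (t - t⁻¹) / 2 := by
  rw [← sinh_log (by positivity)]
  exact self_le_sinh_iff.2 (log_nonneg ht)

lemma one_sub_add_sq_div_two_mul_sq_le_neg_log {t : ℝ} (ht : 1 ≤ t) :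
    1 - t + (t - 1) ^ 2 / (2 * t ^ 2) ≤ -log t := by
  have hgap :
      1 - t + (t - 1) ^ 2 / (2 * t ^ 2) + (t - 1) ^ 3 / (2 * t ^ 2) = -((t - t⁻¹) / 2) := by
    field_simp
    ring
  have hcube : 0 ≤ (t - 1) ^ 3 / (2 * t ^ 2) := by
    have : 0 ≤ t - 1 := by linarith
    positivity
  linarith [log_le_sub_inv_div_two ht]

/-- For every real `t > 0`, `log(1/t) ≥ 1 − t + (t − 1)² / (2·max(1, t²))`. -/
theorem log_inv_ge_of_pos_sq (t : ℝ) (ht : 0 < t) :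
    Real.log (1 / t) ≥ 1 - t + (t - 1) ^ 2 / (2 * max 1 (t ^ 2)) := by
  rw [one_div, log_inv]
  rcases le_total t 1 with ht₁ | ht₁
  · rw [max_eq_left (pow_le_one₀ ht.le ht₁), mul_one]
    exact one_sub_add_sq_div_two_le_neg_log ht ht₁
  · rw [max_eq_right (one_le_pow₀ ht₁)]
    exact one_sub_add_sq_div_two_mul_sq_le_neg_log ht₁
end
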